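/- For all d ≥ 2, if δ₀ = δ ≤ 1/2 and δᵢ = Δ(δᵢ₋₁, d) with Δ(x,d) = (x + x²/d)/(2 - 2(1-1/d)x + (1-1/d)x²), then δᵢ ≤ δ / (2ⁱ(1 - 2δ) + 2δ) for all i ≥ 0. -/
import Mathlib


noncomputable def Δ (x d : ℝ) : ℝ := (x + x^2/d) / (2 - 2*(1 - 1/d)*x + (1 - 1/d)*x^2)

noncomputable def dseq (δ d : ℝ) : ℕ → ℝ
  | 0 => δ
  | i + 1 => Δ (dseq δ d i) d

lemma delta_key (d x : ℝ) (hd : 2 ≤ d) (hx0 : 0 ≤ x) (hx : x ≤ 1/2) :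
    Δ x d ≤ x / (2 - 2*x) := by
  have hd0 : (0:ℝ) < d := by linarith
  have he1 : 0 < 1/d := by positivity
  have he2 : 1/d ≤ 1/2 := by
    rw [div_le_div_iff₀ hd0 (by norm_num)]; linarith
  set e := 1/d with he
  have hx2 : x^2/d = x^2 * e := by rw [he]; ring
  have hden : 0 < 2 - 2*(1 - e)*x + (1 - e)*x^2 := by nlinarith
  unfold Δ
  rw [← he, hx2, div_le_div_iff₀ hden (by linarith)]
  nlinarith [mul_nonneg (mul_nonneg hx0 hx0) hx0]

theorem stmt_5 (d δ : ℝ) (hd : 2 ≤ d) (hδ0 : 0 < δ) (hδ : δ ≤ 1/2) :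
    ∀ i : ℕ, dseq δ d i ≤ δ / (2^i * (1 - 2*δ) + 2*δ) := by
  have hd0 : (0:ℝ) < d := by linarith
  have hD : ∀ i : ℕ, (1:ℝ) ≤ 2^i * (1 - 2*δ) + 2*δ := by
    intro i
    have h1 : (1:ℝ) ≤ 2^i := by
      induction i with
      | zero => norm_num
      | succ n ih => rw [pow_succ]; nlinarith
    nlinarith
  have key : ∀ i : ℕ, 0 ≤ dseq δ d i ∧ dseq δ d i ≤ δ / (2^i * (1 - 2*δ) + 2*δ) := by
    intro i
    induction i with
    | zero =>
      refine ⟨le_of_lt hδ0, ?_⟩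
      show δ ≤ _
      norm_num
    | succ i ih =>
      obtain ⟨h0, h1⟩ := ih
      have hDi := hD i
      have hDi1 := hD (i+1)
      have hη : δ / (2^i * (1 - 2*δ) + 2*δ) ≤ 1/2 := by
        have : δ / (2^i * (1 - 2*δ) + 2*δ) ≤ δ / 1 :=
          div_le_div_of_nonneg_left (le_of_lt hδ0) (by norm_num) hDi
        simp at this; linarith
      have hx : dseq δ d i ≤ 1/2 := le_trans h1 hη
      constructor
      · show 0 ≤ Δ (dseq δ d i) d
        unfold Δ
        have he1 : 0 < 1/d := by positivity
        have he2 : 1/d ≤ 1/2 := by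
          rw [div_le_div_iff₀ hd0 (by norm_num)]; linarith
        apply div_nonneg
        · positivity
        · nlinarith
      · show Δ (dseq δ d i) d ≤ _
        set x := dseq δ d i with hxdef
        set η := δ / (2^i * (1 - 2*δ) + 2*δ) with hηdef
        have step1 : Δ x d ≤ x / (2 - 2*x) := delta_key d x hd h0 hx
        have hDpos : (0:ℝ) < 2^i * (1 - 2*δ) + 2*δ := by linarith
        have hxD : x * (2^i * (1 - 2*δ) + 2*δ) ≤ δ := by
          rw [hηdef, le_div_iff₀ hDpos] at h1
          exact h1
        have hp : (2:ℝ)^(i+1) = 2*2^i := by rw [pow_succ]; ring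
        have step2 : x / (2 - 2*x) ≤ δ / (2^(i+1) * (1 - 2*δ) + 2*δ) := by
          rw [div_le_div_iff₀ (by linarith) (by linarith), hp]
          nlinarith [hxD, mul_nonneg h0 hδ0.le]
        linarith
  intro i
  exact (key i).2
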